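/- arXiv:2312.00747 — 3 statements merged into one kernel-verified Lean document; each statement's English description precedes it below -/
import Mathlib

section
/- The Krawtchouk polynomials are orthogonal with respect to the binomial measure: for any n and any w, sum_{i=0}^{n} binom(n,i) * (K_w^{(n)}(i))^2 = binom(n,w) * 2^n. -/
/-- The Krawtchouk polynomial of degree `w` and order `n`, evaluated at the integer `t`. -/
def krawtchouk (n w t : ℕ) : ℤ :=
  ∑ j ∈ Finset.range (w + 1), (-1 : ℤ) ^ j * (t.choose j : ℤ) * ((n - t).choose (w - j) : ℤ)

open Polynomial Finset

lemma coeff_one_sub_X_pow {S : Type*} [CommRing S] (i j : ℕ) :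
    ((1 - X : S[X]) ^ i).coeff j = (-1 : S) ^ j * (i.choose j : S) := by
  have h : (1 - X : S[X]) = (-1) * (X + C (-1)) := by
    simp only [map_neg, map_one]; ring
  rw [h, mul_pow, ← C_1, ← C_neg, ← C_pow, coeff_C_mul, coeff_X_add_C_pow]
  rcases le_or_gt j i with hji | hji
  · rw [← mul_assoc, ← pow_add]
    have h2 : i + (i - j) = j + 2 * (i - j) := by omega
    rw [h2, pow_add, pow_mul, neg_one_sq, one_pow, mul_one]
  · rw [Nat.choose_eq_zero_of_lt hji]
    simp

lemma coeff_one_sub_one_add {S : Type*} [CommRing S] (a b w : ℕ) :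
    ((1 - X) ^ a * (1 + X) ^ b : S[X]).coeff w
      = ∑ j ∈ range (w + 1), (-1 : S) ^ j * (a.choose j : S) * (b.choose (w - j) : S) := by
  rw [coeff_mul, Finset.Nat.sum_antidiagonal_eq_sum_range_succ_mk]
  refine Finset.sum_congr rfl fun j _ => ?_
  rw [coeff_one_sub_X_pow, coeff_one_add_X_pow]

lemma coeff_kraw {S : Type*} [CommRing S] (n w i : ℕ) :
    ((1 - X) ^ i * (1 + X) ^ (n - i) : S[X]).coeff w = ((krawtchouk n w i : ℤ) : S) := by
  rw [coeff_one_sub_one_add, krawtchouk]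
  push_cast
  rfl

/-- Orthogonality of Krawtchouk polynomials with respect to the binomial measure:
`∑_{i=0}^n binom(n,i) (K_w^{(n)}(i))^2 = binom(n,w) * 2^n`. -/
theorem stmt3 (n w : ℕ) (hw : w ≤ n) :
    ∑ i ∈ Finset.range (n + 1), (n.choose i : ℤ) * (krawtchouk n w i) ^ 2
      = (n.choose w : ℤ) * 2 ^ n := by
  classical
  set Y : Polynomial (Polynomial ℤ) := C X with hY
  have key : ∑ i ∈ range (n + 1),
      ((1 - X) * (1 - Y)) ^ i * ((1 + X) * (1 + Y)) ^ (n - i)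
        * ((n.choose i : ℕ) : Polynomial (Polynomial ℤ))
      = (2 * (1 + X * Y)) ^ n := by
    rw [← add_pow]
    congr 1
    ring
  have h2 := congrArg (fun p : Polynomial (Polynomial ℤ) => ((p.coeff w).coeff w : ℤ)) key
  simp only [finset_sum_coeff] at h2
  -- LHS computation
  have hL : ∀ i, ((((1 - X) * (1 - Y)) ^ i * ((1 + X) * (1 + Y)) ^ (n - i)
        * ((n.choose i : ℕ) : Polynomial (Polynomial ℤ))).coeff w).coeff w
      = (n.choose i : ℤ) * (krawtchouk n w i) ^ 2 := by
    intro i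
    have hterm : ((1 - X) * (1 - Y)) ^ i * ((1 + X) * (1 + Y)) ^ (n - i)
        * ((n.choose i : ℕ) : Polynomial (Polynomial ℤ))
        = ((1 - X) ^ i * (1 + X) ^ (n - i)) *
          C ((1 - X) ^ i * (1 + X) ^ (n - i) * ((n.choose i : ℕ) : Polynomial ℤ)) := by
      simp only [hY, map_mul, map_pow, map_sub, map_add, map_one, map_natCast]
      rw [mul_pow, mul_pow]
      ring
    rw [hterm, coeff_mul_C, coeff_kraw, ← C_eq_intCast, coeff_C_mul,
      ← C_eq_natCast, coeff_mul_C, coeff_kraw, Int.cast_id]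
    ring
  -- RHS computation
  have hR : (((2 * (1 + X * Y) : Polynomial (Polynomial ℤ)) ^ n).coeff w).coeff w
      = (n.choose w : ℤ) * 2 ^ n := by
    have h21 : (2 : Polynomial (Polynomial ℤ)) = C 2 := (map_ofNat C 2).symm
    have hb : ((1 + X * Y : Polynomial (Polynomial ℤ)) ^ n).coeff w
        = X ^ w * ((n.choose w : ℕ) : Polynomial ℤ) := by
      have hc : (1 + X * Y : Polynomial (Polynomial ℤ)) = X * Y + 1 := by ring
      rw [hc, add_pow, finset_sum_coeff]
      rw [Finset.sum_eq_single w]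
      · have : (X * Y : Polynomial (Polynomial ℤ)) ^ w * 1 ^ (n - w)
            * ((n.choose w : ℕ) : Polynomial (Polynomial ℤ))
            = X ^ w * C (X ^ w * ((n.choose w : ℕ) : Polynomial ℤ)) := by
          simp only [hY, map_mul, map_pow, map_natCast, one_pow, mul_one]
          ring
        rw [this, coeff_mul_C, coeff_X_pow_self, one_mul]
      · intro k _ hk
        have : (X * Y : Polynomial (Polynomial ℤ)) ^ k * 1 ^ (n - k)
            * ((n.choose k : ℕ) : Polynomial (Polynomial ℤ))
            = X ^ k * C (X ^ k * ((n.choose k : ℕ) : Polynomial ℤ)) := by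
          simp only [hY, map_mul, map_pow, map_natCast, one_pow, mul_one]
          ring
        rw [this, coeff_mul_C, coeff_X_pow, if_neg (fun h => hk h.symm), zero_mul]
      · intro hmem
        exact absurd (Finset.mem_range.mpr (Nat.lt_succ_of_le hw)) hmem
    rw [mul_pow, h21, ← C_pow, coeff_C_mul, hb]
    have hx : ((2 : Polynomial ℤ) ^ n * (X ^ w * ((n.choose w : ℕ) : Polynomial ℤ)))
        = X ^ w * C ((2 : ℤ) ^ n * (n.choose w : ℤ)) := by
      simp only [map_mul, map_pow, map_natCast, map_ofNat]
      ring
    rw [hx, coeff_mul_C, coeff_X_pow_self, one_mul]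
    ring
  rw [hR] at h2
  rw [← h2]
  exact Finset.sum_congr rfl fun i _ => (hL i).symm
end

section
/- Let P and N be complementary subsets of {1,...,n} of sizes s and n-s, let C be an [n,k] code with C_P of dimension s, let C_aux be an [s, k_aux] code, and let H~ = { (h, c_aux) in C^perp × C_aux : |h_N| = w and |h_P + c_aux| = t_aux } be nonempty. Fix y = c + e with c in C, and x in F_2^s. Let R in F_2^{s×(n-s)} satisfy h_P = h_N R^T for all h in C^perp. Then the bias of <y,h> + <x,c_aux> over uniform (h,c_aux) in H~ equals (1/2^{k - k_aux}) * (1/|H~|) * sum_{i=0}^{n-s} sum_{j=0}^{s} N_{i,j} * K_w^{(n-s)}(i) * K_{t_aux}^{(s)}(j), where N_{i,j} = #{ (r, c^N) in (x + C_aux^perp) × C^N : |r| = j and |(r + e_P) R + e_N + c^N| = i }. -/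
open scoped Classical

/-- The dual code `{ h : ∀ c ∈ C, <c,h> = 0 }`. -/
def dualCode {ι : Type*} [Fintype ι] (C : Submodule (ZMod 2) (ι → ZMod 2)) :
    Submodule (ZMod 2) (ι → ZMod 2) where
  carrier := {h | ∀ c ∈ C, ∑ i, c i * h i = 0}
  zero_mem' := by intro c hc; simp
  add_mem' := by
    intro a b ha hb c hc
    have h1 := ha c hc
    have h2 := hb c hc
    simp only [Pi.add_apply, mul_add, Finset.sum_add_distrib, h1, h2, add_zero]
  smul_mem' := by
    intro r a ha c hc
    have h1 := ha c hc
    simp only [Pi.smul_apply, smul_eq_mul]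
    calc ∑ i, c i * (r * a i) = r * ∑ i, c i * a i := by
          rw [Finset.mul_sum]; exact Finset.sum_congr rfl (fun i _ => by ring)
      _ = 0 := by rw [h1, mul_zero]

/-- The dual code of a code on `F_2^s × F_2^{n-s}` (positions split into `P` and `N`). -/
def dualCodeProd (s m : ℕ)
    (C : Submodule (ZMod 2) ((Fin s → ZMod 2) × (Fin m → ZMod 2))) :
    Submodule (ZMod 2) ((Fin s → ZMod 2) × (Fin m → ZMod 2)) where
  carrier := {h | ∀ c ∈ C, (∑ i, c.1 i * h.1 i) + (∑ j, c.2 j * h.2 j) = 0}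
  zero_mem' := by intro c hc; simp
  add_mem' := by
    intro a b ha hb c hc
    have h1 := ha c hc
    have h2 := hb c hc
    try simp only [Set.mem_setOf_eq] at h1 h2 ⊢
    simp only [Prod.fst_add, Prod.snd_add, Pi.add_apply, mul_add, Finset.sum_add_distrib]
    linear_combination h1 + h2
  smul_mem' := by
    intro r a ha c hc
    have h1 := ha c hc
    try simp only [Set.mem_setOf_eq] at h1 ⊢
    simp only [Prod.smul_fst, Prod.smul_snd, Pi.smul_apply, smul_eq_mul]
    have e1 : ∑ i, c.1 i * (r * a.1 i) = r * ∑ i, c.1 i * a.1 i := by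
      rw [Finset.mul_sum]; exact Finset.sum_congr rfl (fun i _ => by ring)
    have e2 : ∑ j, c.2 j * (r * a.2 j) = r * ∑ j, c.2 j * a.2 j := by
      rw [Finset.mul_sum]; exact Finset.sum_congr rfl (fun j _ => by ring)
    rw [e1, e2, ← mul_add, h1, mul_zero]

/-
Since `C^⊥` lies in the graph `{(R v, v)}`, double duality gives `(p, p R) ∈ C` for every `p`;
hence `C^⊥ = {(R v, v) : v ∈ (C^N)^⊥}` and `dim C^N = k - s`. The substitution
`(h, c_aux) ↦ (v, u) = (h_N, h_P + c_aux)` turns `H~` into the pairs of weights `(w, t_aux)`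
with `v ∈ (C^N)^⊥` and `u + R v ∈ C_aux`, and `⟨y, h⟩ = ⟨e, h⟩` because `c ⊥ h`. Writing both
membership conditions as character averages over `C^N` and `C_aux^⊥` (Poisson summation), the
sums over the two Hamming spheres become Krawtchouk values, grouping by weights gives `N_{i,j}`,
and the normalisation is `|C^N| |C_aux^⊥| = 2^(k - s) 2^(s - k_aux)`.
-/

open Finset Matrix

noncomputable def signChar : AddChar (ZMod 2) ℝ :=
  AddChar.zmodChar 2 (by norm_num : (-1 : ℝ) ^ 2 = 1)

lemma signChar_apply (a : ZMod 2) : signChar a = (-1) ^ a.val := rfl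

lemma signChar_natCast (n : ℕ) : signChar n = (-1) ^ n := AddChar.zmodChar_apply' _ n

lemma zmod_two_eq_zero_or_eq_one (a : ZMod 2) : a = 0 ∨ a = 1 := by decide +revert

lemma signChar_eq_one_iff {a : ZMod 2} : signChar a = 1 ↔ a = 0 := by
  obtain rfl | rfl := zmod_two_eq_zero_or_eq_one a
  · simp
  · norm_num [signChar_apply, show (1 : ZMod 2).val = 1 from rfl]

section Submodule

variable {M : Type*} [AddCommGroup M] [Module (ZMod 2) M] [Fintype M]

lemma card_filter_mem_eq_two_pow (V : Submodule (ZMod 2) M) :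
    #(univ.filter (· ∈ V)) = 2 ^ Module.finrank (ZMod 2) V := by
  rw [← Fintype.card_subtype, Module.card_eq_pow_finrank (K := ZMod 2), ZMod.card]

lemma sum_filter_mem_signChar (V : Submodule (ZMod 2) M) (ℓ : M →ₗ[ZMod 2] ZMod 2) :
    ∑ v ∈ univ.filter (· ∈ V), signChar (ℓ v) =
      if ∀ v ∈ V, ℓ v = 0 then (#(univ.filter (· ∈ V)) : ℝ) else 0 := by
  let ψ : AddChar V ℝ := signChar.compAddMonoidHom (ℓ ∘ₗ V.subtype).toAddMonoidHom
  have hψ : ψ = 0 ↔ ∀ v ∈ V, ℓ v = 0 := by simp [ψ, AddChar.eq_zero_iff, signChar_eq_one_iff]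
  rw [sum_subtype _ (p := (· ∈ V)) (by simp), ← Fintype.card_subtype]
  change ∑ v, ψ v = _
  rw [ψ.sum_eq_ite]
  exact if_congr hψ rfl rfl

end Submodule

section DualCode

variable {ι : Type*} [Fintype ι]

lemma mem_dualCode_iff {V : Submodule (ZMod 2) (ι → ZMod 2)} {u : ι → ZMod 2} :
    u ∈ dualCode V ↔ ∀ c ∈ V, c ⬝ᵥ u = 0 := Iff.rfl

lemma dualCode_eq_orthogonal (V : Submodule (ZMod 2) (ι → ZMod 2)) :
    dualCode V = LinearMap.BilinForm.orthogonal (dotProductBilin (ZMod 2) (ZMod 2)) V := rfl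

lemma isRefl_dotProductBilin :
    LinearMap.BilinForm.IsRefl
      (dotProductBilin (ZMod 2) (ZMod 2) : LinearMap.BilinForm (ZMod 2) (ι → ZMod 2)) :=
  fun x y h => by simpa [dotProduct_comm] using h

variable [DecidableEq ι]

lemma nondegenerate_dotProductBilin :
    LinearMap.BilinForm.Nondegenerate
      (dotProductBilin (ZMod 2) (ZMod 2) : LinearMap.BilinForm (ZMod 2) (ι → ZMod 2)) := by
  refine (isRefl_dotProductBilin.nondegenerate_iff_separatingLeft).mpr fun v hv => ?_
  funext i
  simpa using hv (Pi.single i 1)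

lemma dualCode_dualCode (V : Submodule (ZMod 2) (ι → ZMod 2)) : dualCode (dualCode V) = V := by
  rw [dualCode_eq_orthogonal, dualCode_eq_orthogonal]
  exact LinearMap.BilinForm.orthogonal_orthogonal nondegenerate_dotProductBilin
    isRefl_dotProductBilin V

lemma finrank_dualCode (V : Submodule (ZMod 2) (ι → ZMod 2)) :
    Module.finrank (ZMod 2) (dualCode V) = Fintype.card ι - Module.finrank (ZMod 2) V := by
  rw [dualCode_eq_orthogonal, LinearMap.BilinForm.finrank_orthogonal nondegenerate_dotProductBilin,
    Module.finrank_fintype_fun_eq_card]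

lemma ite_mem_dualCode_eq_sum (V : Submodule (ZMod 2) (ι → ZMod 2)) (u : ι → ZMod 2) :
    (if u ∈ dualCode V then (1 : ℝ) else 0) =
      (#(univ.filter (· ∈ V)) : ℝ)⁻¹ * ∑ d ∈ univ.filter (· ∈ V), signChar (d ⬝ᵥ u) := by
  have hcard : (#(univ.filter (· ∈ V)) : ℝ) ≠ 0 := by
    exact_mod_cast (card_pos.mpr ⟨0, by simp⟩).ne'
  have hsum := sum_filter_mem_signChar V ((dotProductBilin (ZMod 2) (ZMod 2)).flip u)
  simp only [LinearMap.flip_apply, dotProductBilin_apply_apply] at hsum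
  rw [hsum, mem_dualCode_iff]
  split_ifs
  · rw [inv_mul_cancel₀ hcard]
  · rw [mul_zero]

lemma ite_mem_eq_sum_dualCode (V : Submodule (ZMod 2) (ι → ZMod 2)) (u : ι → ZMod 2) :
    (if u ∈ V then (1 : ℝ) else 0) =
      (#(univ.filter (· ∈ dualCode V)) : ℝ)⁻¹ *
        ∑ r ∈ univ.filter (· ∈ dualCode V), signChar (r ⬝ᵥ u) := by
  simpa only [dualCode_dualCode] using ite_mem_dualCode_eq_sum (dualCode V) u

end DualCode

lemma dualCodeProd_dualCodeProd {s m : ℕ}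
    (C : Submodule (ZMod 2) ((Fin s → ZMod 2) × (Fin m → ZMod 2))) :
    dualCodeProd s m (dualCodeProd s m C) = C := by
  let B : LinearMap.BilinForm (ZMod 2) ((Fin s → ZMod 2) × (Fin m → ZMod 2)) :=
    (dotProductBilin (ZMod 2) (ZMod 2)).compl₁₂ (LinearMap.fst _ _ _) (LinearMap.fst _ _ _) +
      (dotProductBilin (ZMod 2) (ZMod 2)).compl₁₂ (LinearMap.snd _ _ _) (LinearMap.snd _ _ _)
  have hB (V : Submodule (ZMod 2) _) : dualCodeProd s m V = B.orthogonal V := rfl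
  have hrefl : B.IsRefl := fun x y h => by simpa [B, dotProduct_comm] using h
  have hnd : B.Nondegenerate := by
    refine (hrefl.nondegenerate_iff_separatingLeft).mpr fun v hv => ?_
    ext i
    · simpa [B] using hv (Pi.single i 1, 0)
    · simpa [B] using hv (0, Pi.single i 1)
  rw [hB, hB, LinearMap.BilinForm.orthogonal_orthogonal hnd hrefl]

section Krawtchouk

variable {ι : Type*} [Fintype ι]

lemma dotProduct_eq_card_filter (z v : ι → ZMod 2) :
    z ⬝ᵥ v = #(univ.filter (fun i => z i ≠ 0 ∧ v i ≠ 0)) := by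
  rw [natCast_card_filter]
  refine sum_congr rfl fun i _ => ?_
  obtain h | h := zmod_two_eq_zero_or_eq_one (z i) <;>
    obtain h' | h' := zmod_two_eq_zero_or_eq_one (v i) <;> simp [h, h']

variable [DecidableEq ι]

lemma card_filter_powersetCard_card_inter (Z : Finset ι) {j w : ℕ} (hj : j ≤ w) :
    #((powersetCard w (univ : Finset ι)).filter (fun T => #(T ∩ Z) = j)) =
      (#Z).choose j * (Fintype.card ι - #Z).choose (w - j) := by
  have split (A B : Finset ι) (hA : A ⊆ Z) (hB : B ⊆ Zᶜ) :
      (A ∪ B) ∩ Z = A ∧ (A ∪ B) \ Z = B := by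
    constructor <;> ext i <;> have := @hA i <;> have := @hB i <;> simp at * <;> tauto
  rw [← card_compl, ← card_powersetCard, ← card_powersetCard, ← card_product]
  apply card_nbij' (fun T => (T ∩ Z, T \ Z)) (fun q => q.1 ∪ q.2)
  · intro T hT
    simp only [mem_coe, mem_filter, mem_powersetCard_univ] at hT
    simp only [mem_coe, mem_product, mem_powersetCard]
    refine ⟨⟨inter_subset_right, hT.2⟩, fun i => by simp +contextual, ?_⟩
    have := card_sdiff_add_card_inter T Z
    omega
  · rintro ⟨A, B⟩ h
    simp only [mem_coe, mem_product, mem_powersetCard] at h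
    obtain ⟨⟨hA, hAc⟩, hB, hBc⟩ := h
    have hdisj : Disjoint A B := disjoint_of_subset_right hB (disjoint_compl_right_iff.mpr hA)
    simp only [mem_coe, mem_filter, mem_powersetCard_univ, card_union_of_disjoint hdisj,
      (split A B hA hB).1]
    omega
  · intro T _
    exact (union_comm _ _).trans (sdiff_union_inter T Z)
  · rintro ⟨A, B⟩ h
    simp only [mem_coe, mem_product, mem_powersetCard] at h
    simp [split A B h.1.1 h.2.1]

lemma sum_filter_hammingNorm_eq_sum_powersetCard {β : Type*} [AddCommMonoid β] (w : ℕ)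
    (F : Finset ι → β) :
    ∑ v ∈ univ.filter (fun v : ι → ZMod 2 => hammingNorm v = w), F (univ.filter (v · ≠ 0)) =
      ∑ T ∈ powersetCard w univ, F T := by
  apply sum_nbij' (fun v => univ.filter (v · ≠ 0)) (fun T i => if i ∈ T then 1 else 0)
  · intro v hv
    simpa [mem_powersetCard_univ, hammingNorm] using hv
  · intro T hT
    simp only [mem_powersetCard_univ] at hT
    simp [hammingNorm, hT]
  · intro v _
    funext i
    simp only [mem_filter, mem_univ, true_and]
    obtain h | h := zmod_two_eq_zero_or_eq_one (v i) <;> simp [h]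
  · intro T _
    ext i
    simp
  · intro v _
    rfl

lemma sum_signChar_dotProduct_eq_krawtchouk (z : ι → ZMod 2) (w : ℕ) :
    ∑ v ∈ univ.filter (fun v : ι → ZMod 2 => hammingNorm v = w), signChar (z ⬝ᵥ v) =
      krawtchouk (Fintype.card ι) w (hammingNorm z) := by
  set Z := univ.filter (z · ≠ 0)
  have hterm (v : ι → ZMod 2) : signChar (z ⬝ᵥ v) = (-1) ^ #(univ.filter (v · ≠ 0) ∩ Z) := by
    rw [dotProduct_eq_card_filter, signChar_natCast, ← filter_and]
    simp only [and_comm]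
  simp only [hterm]
  rw [sum_filter_hammingNorm_eq_sum_powersetCard w (fun T => (-1 : ℝ) ^ #(T ∩ Z)),
    ← sum_fiberwise_of_maps_to (g := fun T => #(T ∩ Z)) (t := range (w + 1)) fun T hT => by
      rw [mem_powersetCard_univ] at hT
      exact mem_range.mpr (Nat.lt_succ_of_le (hT ▸ card_le_card inter_subset_left))]
  rw [krawtchouk, show hammingNorm z = #Z from rfl]
  push_cast
  refine sum_congr rfl fun j hj => ?_
  rw [sum_congr rfl fun T hT => by rw [(mem_filter.1 hT).2], sum_const,
    card_filter_powersetCard_card_inter Z (Nat.le_of_lt_succ (mem_range.1 hj)), nsmul_eq_mul]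
  push_cast
  ring

end Krawtchouk

section Poisson

variable {ι κ : Type*} [Fintype ι] [Fintype κ]

lemma dotProduct_add_add_eq (R : Matrix κ ι (ZMod 2)) (d f v : ι → ZMod 2)
    (r b e u : κ → ZMod 2) :
    (r + b) ⬝ᵥ (u + R *ᵥ v) + d ⬝ᵥ v + (e ⬝ᵥ R *ᵥ v + f ⬝ᵥ v + b ⬝ᵥ (u + R *ᵥ v)) =
      ((r + e) ᵥ* R + f + d) ⬝ᵥ v + r ⬝ᵥ u := by
  have h2 : (2 : ZMod 2) = 0 := rfl
  simp only [add_dotProduct, dotProduct_add, add_vecMul, dotProduct_mulVec]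
  linear_combination (b ⬝ᵥ u + (b ᵥ* R) ⬝ᵥ v) * h2

variable [DecidableEq ι] [DecidableEq κ]

lemma sum_filter_add_mem {V : Submodule (ZMod 2) (κ → ZMod 2)} (b : κ → ZMod 2)
    (g : (κ → ZMod 2) → ℝ) :
    ∑ r ∈ univ.filter (· ∈ V), g r = ∑ r ∈ univ.filter (· + b ∈ V), g (r + b) := by
  rw [sum_filter, sum_filter]
  exact (Fintype.sum_equiv (Equiv.addRight b) _ _ fun r => rfl).symm

lemma sum_hammingNorm_sum_hammingNorm_signChar (α : ι → ZMod 2) (β : κ → ZMod 2) (w t : ℕ) :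
    ∑ v ∈ univ.filter (fun v : ι → ZMod 2 => hammingNorm v = w),
      ∑ u ∈ univ.filter (fun u : κ → ZMod 2 => hammingNorm u = t), signChar (α ⬝ᵥ v + β ⬝ᵥ u) =
      krawtchouk (Fintype.card ι) w (hammingNorm α) *
        krawtchouk (Fintype.card κ) t (hammingNorm β) := by
  simp only [AddChar.map_add_eq_mul, ← mul_sum, ← sum_mul, sum_signChar_dotProduct_eq_krawtchouk]

lemma ite_mem_dualCode_and_mem_signChar_eq (D : Submodule (ZMod 2) (ι → ZMod 2))
    (A : Submodule (ZMod 2) (κ → ZMod 2)) (R : Matrix κ ι (ZMod 2)) (e b u : κ → ZMod 2)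
    (f v : ι → ZMod 2) :
    (if v ∈ dualCode D ∧ u + R *ᵥ v ∈ A then
        signChar (e ⬝ᵥ R *ᵥ v + f ⬝ᵥ v + b ⬝ᵥ (u + R *ᵥ v)) else 0) =
      ((#(univ.filter (· ∈ D)) : ℝ) * #(univ.filter (· ∈ dualCode A)))⁻¹ *
        ∑ r ∈ univ.filter (· + b ∈ dualCode A), ∑ d ∈ univ.filter (· ∈ D),
          signChar (((r + e) ᵥ* R + f + d) ⬝ᵥ v + r ⬝ᵥ u) := by
  rw [← boole_mul, ← mul_one (1 : ℝ), ← ite_zero_mul_ite_zero, ite_mem_dualCode_eq_sum,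
    ite_mem_eq_sum_dualCode, sum_filter_add_mem b, mul_inv, mul_mul_mul_comm, mul_assoc,
    mul_comm (∑ d ∈ _, _), sum_mul_sum, sum_mul]
  simp only [sum_mul, ← AddChar.map_add_eq_mul, dotProduct_add_add_eq]

lemma sum_filter_dualCode_signChar_eq (D : Submodule (ZMod 2) (ι → ZMod 2))
    (A : Submodule (ZMod 2) (κ → ZMod 2)) (R : Matrix κ ι (ZMod 2)) (e b : κ → ZMod 2)
    (f : ι → ZMod 2) (w t : ℕ) :
    ∑ q ∈ univ.filter (fun q : (ι → ZMod 2) × (κ → ZMod 2) => q.1 ∈ dualCode D ∧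
        q.2 + R *ᵥ q.1 ∈ A ∧ hammingNorm q.1 = w ∧ hammingNorm q.2 = t),
        signChar (e ⬝ᵥ R *ᵥ q.1 + f ⬝ᵥ q.1 + b ⬝ᵥ (q.2 + R *ᵥ q.1)) =
      ((#(univ.filter (· ∈ D)) : ℝ) * #(univ.filter (· ∈ dualCode A)))⁻¹ *
        ∑ r ∈ univ.filter (· + b ∈ dualCode A), ∑ d ∈ univ.filter (· ∈ D),
          (krawtchouk (Fintype.card ι) w (hammingNorm ((r + e) ᵥ* R + f + d)) : ℝ) *
            krawtchouk (Fintype.card κ) t (hammingNorm r) := by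
  set W := univ.filter (fun v : ι → ZMod 2 => hammingNorm v = w) ×ˢ
    univ.filter (fun u : κ → ZMod 2 => hammingNorm u = t)
  have hfilter : univ.filter (fun q : (ι → ZMod 2) × (κ → ZMod 2) => q.1 ∈ dualCode D ∧
      q.2 + R *ᵥ q.1 ∈ A ∧ hammingNorm q.1 = w ∧ hammingNorm q.2 = t) =
      W.filter (fun q => q.1 ∈ dualCode D ∧ q.2 + R *ᵥ q.1 ∈ A) := by
    ext q
    simp only [W, mem_filter, mem_univ, mem_product, true_and]
    tauto
  rw [hfilter, sum_filter]
  simp only [ite_mem_dualCode_and_mem_signChar_eq, ← mul_sum]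
  rw [sum_comm]
  simp only [sum_comm (s := W), W, sum_product, sum_hammingNorm_sum_hammingNorm_signChar]

end Poisson

lemma sum_mul_eq_sum_range_sum_range {α β : Type*} [CommSemiring β] (S : Finset α)
    (f g : α → ℕ) {m s : ℕ} (hf : ∀ q ∈ S, f q ≤ m) (hg : ∀ q ∈ S, g q ≤ s) (φ ψ : ℕ → β) :
    ∑ q ∈ S, φ (f q) * ψ (g q) =
      ∑ i ∈ range (m + 1), ∑ j ∈ range (s + 1),
        (#(S.filter (fun q => g q = j ∧ f q = i)) : β) * φ i * ψ j := by
  rw [← sum_fiberwise_of_maps_to (g := fun q => (f q, g q)) (t := range (m + 1) ×ˢ range (s + 1))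
    fun q hq => mem_product.2 ⟨mem_range.2 (Nat.lt_succ_of_le (hf q hq)),
      mem_range.2 (Nat.lt_succ_of_le (hg q hq))⟩, sum_product]
  refine sum_congr rfl fun i _ => sum_congr rfl fun j _ => ?_
  rw [sum_congr rfl fun q hq => by rw [(Prod.mk.inj (mem_filter.1 hq).2).1,
    (Prod.mk.inj (mem_filter.1 hq).2).2], sum_const, nsmul_eq_mul, mul_assoc]
  congr 3
  ext q
  simp [and_comm]

lemma sum_sum_krawtchouk_eq_sum_card {s m : ℕ} (A : Submodule (ZMod 2) (Fin s → ZMod 2))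
    (D : Submodule (ZMod 2) (Fin m → ZMod 2)) (R : Matrix (Fin s) (Fin m) (ZMod 2))
    (e b : Fin s → ZMod 2) (f : Fin m → ZMod 2) (w t : ℕ) :
    ∑ r ∈ univ.filter (· + b ∈ A), ∑ d ∈ univ.filter (· ∈ D),
        (krawtchouk m w (hammingNorm ((r + e) ᵥ* R + f + d)) : ℝ) *
          krawtchouk s t (hammingNorm r) =
      ∑ i ∈ range (m + 1), ∑ j ∈ range (s + 1),
        (#(univ.filter (fun q : (Fin s → ZMod 2) × (Fin m → ZMod 2) =>
          q.1 + b ∈ A ∧ q.2 ∈ D ∧ hammingNorm q.1 = j ∧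
            hammingNorm ((q.1 + e) ᵥ* R + f + q.2) = i)) : ℝ) *
          krawtchouk m w i * krawtchouk s t j := by
  have hgroup := sum_mul_eq_sum_range_sum_range (univ.filter (· + b ∈ A) ×ˢ univ.filter (· ∈ D))
    (fun q => hammingNorm ((q.1 + e) ᵥ* R + f + q.2)) (fun q => hammingNorm q.1)
    (fun q _ => hammingNorm_le_card_fintype.trans_eq (Fintype.card_fin m))
    (fun q _ => hammingNorm_le_card_fintype.trans_eq (Fintype.card_fin s))
    (fun i => (krawtchouk m w i : ℝ)) (fun j => (krawtchouk s t j : ℝ))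
  rw [← sum_product', hgroup]
  refine sum_congr rfl fun i _ => sum_congr rfl fun j _ => ?_
  congr 4
  ext q
  simp only [mem_filter, mem_product, mem_univ, true_and]
  tauto

section Graph

variable {s m : ℕ} {C : Submodule (ZMod 2) ((Fin s → ZMod 2) × (Fin m → ZMod 2))}
  {R : Matrix (Fin s) (Fin m) (ZMod 2)}

lemma add_dotProduct_eq_of_mem_dualCodeProd {c h : (Fin s → ZMod 2) × (Fin m → ZMod 2)}
    (hc : c ∈ C) (hh : h ∈ dualCodeProd s m C) (e : (Fin s → ZMod 2) × (Fin m → ZMod 2)) :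
    (c + e).1 ⬝ᵥ h.1 + (c + e).2 ⬝ᵥ h.2 = e.1 ⬝ᵥ h.1 + e.2 ⬝ᵥ h.2 := by
  have hch : c.1 ⬝ᵥ h.1 + c.2 ⬝ᵥ h.2 = 0 := hh c hc
  simp only [Prod.fst_add, Prod.snd_add, add_dotProduct]
  linear_combination hch

lemma mk_vecMul_mem (hR : ∀ h ∈ dualCodeProd s m C, h.1 = R *ᵥ h.2) (p : Fin s → ZMod 2) :
    (p, p ᵥ* R) ∈ C := by
  rw [← dualCodeProd_dualCodeProd C]
  intro h hh
  change h.1 ⬝ᵥ p + h.2 ⬝ᵥ (p ᵥ* R) = 0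
  rw [hR h hh, dotProduct_comm, dotProduct_mulVec, dotProduct_comm, ZModModule.add_self]

lemma vecMul_add_mem_comap_inr (hR : ∀ h ∈ dualCodeProd s m C, h.1 = R *ᵥ h.2)
    {c : (Fin s → ZMod 2) × (Fin m → ZMod 2)} (hc : c ∈ C) :
    c.1 ᵥ* R + c.2 ∈ C.comap (LinearMap.inr (ZMod 2) _ _) := by
  have : ((0 : Fin s → ZMod 2), c.1 ᵥ* R + c.2) = (c.1, c.1 ᵥ* R) + c := by
    ext <;> simp [ZModModule.add_self, add_comm]
  simpa [this] using C.add_mem (mk_vecMul_mem hR c.1) hc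

lemma mem_dualCodeProd_iff (hR : ∀ h ∈ dualCodeProd s m C, h.1 = R *ᵥ h.2)
    {h : (Fin s → ZMod 2) × (Fin m → ZMod 2)} :
    h ∈ dualCodeProd s m C ↔
      h.1 = R *ᵥ h.2 ∧ h.2 ∈ dualCode (C.comap (LinearMap.inr (ZMod 2) _ _)) := by
  refine ⟨fun hh => ⟨hR h hh, fun d hd => by simpa using hh _ hd⟩, ?_⟩
  rintro ⟨h1, h2⟩ c hc
  change c.1 ⬝ᵥ h.1 + c.2 ⬝ᵥ h.2 = 0
  rw [h1, dotProduct_mulVec, ← add_dotProduct]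
  exact h2 _ (vecMul_add_mem_comap_inr hR hc)

lemma finrank_comap_inr_add (hR : ∀ h ∈ dualCodeProd s m C, h.1 = R *ᵥ h.2) :
    Module.finrank (ZMod 2) (C.comap (LinearMap.inr (ZMod 2) _ _)) + s =
      Module.finrank (ZMod 2) C := by
  let e : C ≃ (Fin s → ZMod 2) × C.comap (LinearMap.inr (ZMod 2) _ _) :=
    { toFun c := (c.1.1, ⟨c.1.1 ᵥ* R + c.1.2, vecMul_add_mem_comap_inr hR c.2⟩)
      invFun q := ⟨(q.1, q.1 ᵥ* R + q.2), by simpa using C.add_mem (mk_vecMul_mem hR q.1) q.2.2⟩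
      left_inv c := by ext <;> simp [← add_assoc, ZModModule.add_self]
      right_inv q := by ext <;> simp [← add_assoc, ZModModule.add_self] }
  have hcard := Fintype.card_congr e
  rw [Fintype.card_prod, Module.card_eq_pow_finrank (K := ZMod 2) (V := C),
    Module.card_eq_pow_finrank (K := ZMod 2) (V := C.comap _), Fintype.card_fun, ZMod.card,
    Fintype.card_fin, ← pow_add] at hcard
  have := Nat.pow_right_injective le_rfl hcard
  omega

lemma card_comap_inr_mul_card_dualCode (hR : ∀ h ∈ dualCodeProd s m C, h.1 = R *ᵥ h.2)
    (A : Submodule (ZMod 2) (Fin s → ZMod 2)) :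
    (#(univ.filter (· ∈ C.comap (LinearMap.inr (ZMod 2) _ _))) : ℝ) *
        #(univ.filter (· ∈ dualCode A)) =
      2 ^ (Module.finrank (ZMod 2) C - Module.finrank (ZMod 2) A) := by
  have hCN := finrank_comap_inr_add hR
  have hA := (Submodule.finrank_le A).trans_eq (Module.finrank_fin_fun (ZMod 2))
  rw [card_filter_mem_eq_two_pow, card_filter_mem_eq_two_pow, finrank_dualCode, Fintype.card_fin]
  push_cast
  rw [← pow_add]
  congr 1
  omega

lemma sum_filter_dualCodeProd_eq (hR : ∀ h ∈ dualCodeProd s m C, h.1 = R *ᵥ h.2)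
    (A : Submodule (ZMod 2) (Fin s → ZMod 2)) (w t : ℕ) {β : Type*} [AddCommMonoid β]
    (F : ((Fin s → ZMod 2) × (Fin m → ZMod 2)) × (Fin s → ZMod 2) → β) :
    ∑ p ∈ univ.filter (fun p : ((Fin s → ZMod 2) × (Fin m → ZMod 2)) × (Fin s → ZMod 2) =>
        p.1 ∈ dualCodeProd s m C ∧ p.2 ∈ A ∧ hammingNorm p.1.2 = w ∧
          hammingNorm (p.1.1 + p.2) = t), F p =
      ∑ q ∈ univ.filter (fun q : (Fin m → ZMod 2) × (Fin s → ZMod 2) =>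
        q.1 ∈ dualCode (C.comap (LinearMap.inr (ZMod 2) _ _)) ∧ q.2 + R *ᵥ q.1 ∈ A ∧
          hammingNorm q.1 = w ∧ hammingNorm q.2 = t),
        F ((R *ᵥ q.1, q.1), q.2 + R *ᵥ q.1) := by
  have cancel_left (a b : Fin s → ZMod 2) : a + b + a = b := by
    rw [← ZModModule.sub_eq_add, add_sub_cancel_left]
  have cancel_right (a b : Fin s → ZMod 2) : a + b + b = a := by
    rw [← ZModModule.sub_eq_add, add_sub_cancel_right]
  apply sum_nbij' (fun p => (p.1.2, p.1.1 + p.2)) (fun q => ((R *ᵥ q.1, q.1), q.2 + R *ᵥ q.1))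
  all_goals simp only [mem_filter, mem_univ, true_and, mem_dualCodeProd_iff hR]
  · rintro p ⟨⟨h1, h2⟩, hA, hw, ht⟩
    exact ⟨h2, by rwa [← h1, cancel_left], hw, ht⟩
  · rintro q ⟨h2, hA, hw, ht⟩
    exact ⟨h2, hA, hw, by rwa [add_comm, cancel_right]⟩
  · rintro p ⟨⟨h1, -⟩, -⟩
    rw [← h1, cancel_left]
  · intro q _
    rw [add_comm, cancel_right]
  · rintro p ⟨⟨h1, -⟩, -⟩
    rw [← h1, cancel_left]

end Graph

theorem stmt10_general (s m k kaux w taux : ℕ)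
    (C : Submodule (ZMod 2) ((Fin s → ZMod 2) × (Fin m → ZMod 2)))
    (Caux : Submodule (ZMod 2) (Fin s → ZMod 2))
    (hk : Module.finrank (ZMod 2) C = k)
    (hkaux : Module.finrank (ZMod 2) Caux = kaux)
    (R : Matrix (Fin s) (Fin m) (ZMod 2))
    (hR : ∀ h ∈ dualCodeProd s m C, h.1 = Matrix.mulVec R h.2)
    (eP : Fin s → ZMod 2) (eN : Fin m → ZMod 2)
    (c : (Fin s → ZMod 2) × (Fin m → ZMod 2)) (hc : c ∈ C)
    (y : (Fin s → ZMod 2) × (Fin m → ZMod 2)) (hy : y = c + (eP, eN))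
    (x : Fin s → ZMod 2)
    (Ht : Finset (((Fin s → ZMod 2) × (Fin m → ZMod 2)) × (Fin s → ZMod 2)))
    (hHt : Ht = Finset.univ.filter (fun p =>
        p.1 ∈ dualCodeProd s m C ∧ p.2 ∈ Caux ∧
        hammingNorm p.1.2 = w ∧ hammingNorm (p.1.1 + p.2) = taux))
    (N : ℕ → ℕ → ℕ)
    (hN : ∀ i j, N i j =
      (Finset.univ.filter (fun q : (Fin s → ZMod 2) × (Fin m → ZMod 2) =>
        (q.1 + x) ∈ dualCode Caux ∧
        q.2 ∈ Submodule.comap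
          (LinearMap.inr (ZMod 2) (Fin s → ZMod 2) (Fin m → ZMod 2)) C ∧
        hammingNorm q.1 = j ∧
        hammingNorm (Matrix.vecMul (q.1 + eP) R + eN + q.2) = i)).card) :
    (Ht.card : ℝ)⁻¹ *
        ∑ p ∈ Ht,
          (-1 : ℝ) ^
            (((∑ i, y.1 i * p.1.1 i) + (∑ j, y.2 j * p.1.2 j)) + (∑ i, x i * p.2 i)).val
      = ((2 : ℝ) ^ (k - kaux))⁻¹ * (Ht.card : ℝ)⁻¹ *
          ∑ i ∈ Finset.range (m + 1), ∑ j ∈ Finset.range (s + 1),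
            (N i j : ℝ) * (krawtchouk m w i : ℝ) * (krawtchouk s taux j : ℝ) := by
  subst hHt hy hk hkaux
  rw [mul_comm _ (Finset.card _ : ℝ)⁻¹, mul_assoc, sum_filter_dualCodeProd_eq hR]
  congr 1
  have hsyndrome : ∀ q ∈ univ.filter (fun q : (Fin m → ZMod 2) × (Fin s → ZMod 2) =>
      q.1 ∈ dualCode (C.comap (LinearMap.inr (ZMod 2) _ _)) ∧ q.2 + R *ᵥ q.1 ∈ Caux ∧
        hammingNorm q.1 = w ∧ hammingNorm q.2 = taux),
      (-1 : ℝ) ^ (((c + (eP, eN)).1 ⬝ᵥ R *ᵥ q.1 + (c + (eP, eN)).2 ⬝ᵥ q.1) +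
          x ⬝ᵥ (q.2 + R *ᵥ q.1)).val =
        signChar (eP ⬝ᵥ R *ᵥ q.1 + eN ⬝ᵥ q.1 + x ⬝ᵥ (q.2 + R *ᵥ q.1)) := fun q hq => by
    have hh : (R *ᵥ q.1, q.1) ∈ dualCodeProd s m C :=
      (mem_dualCodeProd_iff hR).2 ⟨rfl, (mem_filter.1 hq).2.1⟩
    rw [← signChar_apply]
    exact congrArg (signChar <| · + _) (add_dotProduct_eq_of_mem_dualCodeProd hc hh (eP, eN))
  refine (sum_congr rfl hsyndrome).trans ?_
  rw [sum_filter_dualCode_signChar_eq, card_comap_inr_mul_card_dualCode hR, Fintype.card_fin,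
    Fintype.card_fin, sum_sum_krawtchouk_eq_sum_card]
  simp only [hN]

/-- Duality formula for the bias of the `double-RLPN` LPN samples.  Positions are split into
`P` of size `s` and `N` of size `m = n - s`; `C` is an `[n,k]` code with `C_P` full rank,
`C_aux` an `[s,k_aux]` code, `H~` the set of pairs `(h, c_aux) ∈ C^⊥ × C_aux` with
`|h_N| = w` and `|h_P + c_aux| = t_aux`, `y = c + e` with `c ∈ C` and `e = (e_P, e_N)`, and
`R` is the matrix with `h_P = h_N Rᵀ` on `C^⊥`.  Then the bias of `<y,h> + <x,c_aux>` over
uniform `(h, c_aux) ∈ H~` equals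
`2^{-(k-k_aux)} |H~|⁻¹ ∑_{i,j} N_{i,j} K_w^{(m)}(i) K_{t_aux}^{(s)}(j)`, where
`N_{i,j} = #{(r, c^N) ∈ (x + C_aux^⊥) × C^N : |r| = j, |(r+e_P)R + e_N + c^N| = i}`. -/
theorem stmt10 (s m k kaux w taux : ℕ)
    (C : Submodule (ZMod 2) ((Fin s → ZMod 2) × (Fin m → ZMod 2)))
    (Caux : Submodule (ZMod 2) (Fin s → ZMod 2))
    (hk : Module.finrank (ZMod 2) C = k)
    (hkaux : Module.finrank (ZMod 2) Caux = kaux)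
    (hkk : kaux ≤ k)
    (hfull : Submodule.map
      (LinearMap.fst (ZMod 2) (Fin s → ZMod 2) (Fin m → ZMod 2)) C = ⊤)
    (R : Matrix (Fin s) (Fin m) (ZMod 2))
    (hR : ∀ h ∈ dualCodeProd s m C, h.1 = Matrix.mulVec R h.2)
    (eP : Fin s → ZMod 2) (eN : Fin m → ZMod 2)
    (c : (Fin s → ZMod 2) × (Fin m → ZMod 2)) (hc : c ∈ C)
    (y : (Fin s → ZMod 2) × (Fin m → ZMod 2)) (hy : y = c + (eP, eN))
    (x : Fin s → ZMod 2)
    (Ht : Finset (((Fin s → ZMod 2) × (Fin m → ZMod 2)) × (Fin s → ZMod 2)))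
    (hHt : Ht = Finset.univ.filter (fun p =>
        p.1 ∈ dualCodeProd s m C ∧ p.2 ∈ Caux ∧
        hammingNorm p.1.2 = w ∧ hammingNorm (p.1.1 + p.2) = taux))
    (hne : Ht.Nonempty)
    (N : ℕ → ℕ → ℕ)
    (hN : ∀ i j, N i j =
      (Finset.univ.filter (fun q : (Fin s → ZMod 2) × (Fin m → ZMod 2) =>
        (q.1 + x) ∈ dualCode Caux ∧
        q.2 ∈ Submodule.comap
          (LinearMap.inr (ZMod 2) (Fin s → ZMod 2) (Fin m → ZMod 2)) C ∧
        hammingNorm q.1 = j ∧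
        hammingNorm (Matrix.vecMul (q.1 + eP) R + eN + q.2) = i)).card) :
    (Ht.card : ℝ)⁻¹ *
        ∑ p ∈ Ht,
          (-1 : ℝ) ^
            (((∑ i, y.1 i * p.1.1 i) + (∑ j, y.2 j * p.1.2 j)) + (∑ i, x i * p.2 i)).val
      = ((2 : ℝ) ^ (k - kaux))⁻¹ * (Ht.card : ℝ)⁻¹ *
          ∑ i ∈ Finset.range (m + 1), ∑ j ∈ Finset.range (s + 1),
            (N i j : ℝ) * (krawtchouk m w i : ℝ) * (krawtchouk s taux j : ℝ) :=
  stmt10_general s m k kaux w taux C Caux hk hkaux R hR eP eN c hc y hy x Ht hHt N hN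
end

section
/- If X follows a Poisson distribution with parameter λ >= 0, then for any r > 0, P(|X - λ| > r) <= 2 * exp(- r^2 / (2(λ + r))). -/
/-!
Chernoff's method, on both tails at once with the parameter `t = r / (λ + r)`. The centred
moment generating function of a Poisson variable is `E e^{s(X-λ)} = exp (λ (e^s - 1 - s))`, and
`(e^s - 1 - s)(1 - |s|) ≤ s² / 2` for `|s| ≤ 1` (the series of `e^s - 1 - s` is dominated by that of
`e^{|s|} - 1 - |s|`, and `e^u (1 - u) ≤ 1 - u² / 2` for `u ≥ 0`). Since `1 - t = λ / (λ + r)`, this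
gives `λ (e^{±t} - 1 ∓ t) ≤ r² / (2 (λ + r))`, while the Chernoff factor is `e^{-tr} = e^{-r²/(λ+r)}`.
-/

open MeasureTheory Real

lemma Real.abs_exp_sub_one_sub_le (x : ℝ) : |exp x - 1 - x| ≤ exp |x| - 1 - |x| := by
  have h := Complex.norm_exp_sub_sum_le_exp_norm_sub_sum x 2
  norm_num [Finset.sum_range_succ] at h
  rw [sub_sub, sub_sub]
  exact_mod_cast h

lemma Real.exp_mul_one_sub_le {x : ℝ} (hx : 0 ≤ x) : exp x * (1 - x) ≤ 1 - x ^ 2 / 2 := by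
  have hanti : Antitone fun y : ℝ => exp y * (1 - y) + y ^ 2 / 2 := by
    refine antitone_of_hasDerivAt_nonpos (f' := fun y => y * (1 - exp y)) (fun y => ?_)
      (fun y => ?_)
    · exact (((hasDerivAt_exp y).mul ((hasDerivAt_id' y).const_sub 1)).add
        ((hasDerivAt_pow 2 y).div_const 2)).congr_deriv (by ring)
    · rcases le_total 0 y with hy | hy
      · exact mul_nonpos_of_nonneg_of_nonpos hy (by linarith [one_le_exp hy])
      · exact mul_nonpos_of_nonpos_of_nonneg hy (by linarith [exp_le_one_iff.2 hy])
  have h := hanti hx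
  simp only [exp_zero] at h
  linarith

lemma Real.exp_sub_one_sub_mul_one_sub_abs_le {x : ℝ} (hx : |x| ≤ 1) :
    (exp x - 1 - x) * (1 - |x|) ≤ x ^ 2 / 2 := by
  calc (exp x - 1 - x) * (1 - |x|) ≤ (exp |x| - 1 - |x|) * (1 - |x|) :=
        mul_le_mul_of_nonneg_right ((le_abs_self _).trans (abs_exp_sub_one_sub_le x))
          (by linarith)
    _ ≤ |x| ^ 2 / 2 := by nlinarith [exp_mul_one_sub_le (abs_nonneg x)]
    _ = x ^ 2 / 2 := by rw [sq_abs]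

lemma hasSum_poisson_mul_exp (lam s : ℝ) :
    HasSum (fun m : ℕ => exp (-lam) * lam ^ m / m.factorial * exp (s * (m - lam)))
      (exp (lam * (exp s - 1 - s))) := by
  have h := (NormedSpace.expSeries_div_hasSum_exp (lam * exp s)).mul_left (exp (-lam - s * lam))
  rw [← exp_eq_exp_ℝ, ← exp_add] at h
  have hterm : (fun m : ℕ => exp (-lam) * lam ^ m / m.factorial * exp (s * (m - lam))) =
      fun m => exp (-lam - s * lam) * ((lam * exp s) ^ m / m.factorial) := by
    funext m
    rw [mul_pow, ← exp_nat_mul, mul_sub, exp_sub, exp_sub, mul_comm s]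
    field_simp
  rwa [hterm, show lam * (exp s - 1 - s) = -lam - s * lam + lam * exp s by ring]

lemma measure_setOf_le_tsum_mul {Ω : Type*} [MeasurableSpace Ω] (μ : Measure Ω) (X : Ω → ℕ)
    {P : ℕ → Prop} {w : ℕ → ENNReal} (hw : ∀ m, P m → 1 ≤ w m) :
    μ {ω | P (X ω)} ≤ ∑' m, μ {ω | X ω = m} * w m := by
  have hcover : {ω | P (X ω)} ⊆ ⋃ m, {ω | X ω = m ∧ P m} := fun ω hω =>
    Set.mem_iUnion.2 ⟨X ω, rfl, hω⟩
  refine (measure_mono hcover).trans <| (measure_iUnion_le _).trans <|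
    ENNReal.tsum_le_tsum fun m => ?_
  by_cases hm : P m
  · calc μ {ω | X ω = m ∧ P m} ≤ μ {ω | X ω = m} := measure_mono fun ω hω => hω.1
      _ ≤ μ {ω | X ω = m} * w m := le_mul_of_one_le_right' (hw m hm)
  · simp [hm]

lemma Real.exp_mul_le_exp_mul_add_exp_neg_mul {t r x : ℝ} (ht : 0 ≤ t) (h : r ≤ |x|) :
    exp (t * r) ≤ exp (t * x) + exp (-(t * x)) := by
  rcases le_total 0 x with hx | hx
  · rw [abs_of_nonneg hx] at h
    linarith [exp_le_exp.2 (mul_le_mul_of_nonneg_left h ht), exp_pos (-(t * x))]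
  · rw [abs_of_nonpos hx] at h
    have : t * r ≤ -(t * x) := by nlinarith
    linarith [exp_le_exp.2 this, exp_pos (t * x)]

lemma Real.mul_exp_sub_one_sub_le_of_abs_eq {lam r s : ℝ} (hlam : 0 ≤ lam) (hr : 0 < r)
    (hs : |s| = r / (lam + r)) : lam * (exp s - 1 - s) ≤ r ^ 2 / (2 * (lam + r)) := by
  have hlr : 0 < lam + r := by linarith
  have h := exp_sub_one_sub_mul_one_sub_abs_le (x := s) (by rw [hs, div_le_one hlr]; linarith)
  have h1 : 1 - |s| = lam / (lam + r) := by rw [hs]; field_simp; ring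
  rw [h1, ← sq_abs, hs] at h
  calc lam * (exp s - 1 - s) = (exp s - 1 - s) * (lam / (lam + r)) * (lam + r) := by
        field_simp
    _ ≤ (r / (lam + r)) ^ 2 / 2 * (lam + r) := by gcongr
    _ = r ^ 2 / (2 * (lam + r)) := by field_simp

lemma poisson_abs_sub_tail_le {Ω : Type*} [MeasurableSpace Ω] (μ : Measure Ω) {lam : ℝ}
    (hlam : 0 ≤ lam) (X : Ω → ℕ)
    (hX : ∀ m : ℕ, μ {ω | X ω = m} = ENNReal.ofReal (exp (-lam) * lam ^ m / m.factorial))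
    {r t : ℝ} (ht : 0 ≤ t) :
    (μ {ω | r < |(X ω : ℝ) - lam|}).toReal ≤
      (exp (lam * (exp t - 1 - t)) + exp (lam * (exp (-t) - 1 - -t))) * exp (-(t * r)) := by
  set p : ℕ → ℝ := fun m => exp (-lam) * lam ^ m / m.factorial
  have hsum := ((hasSum_poisson_mul_exp lam t).add
    (hasSum_poisson_mul_exp lam (-t))).mul_right (exp (-(t * r)))
  have hweight : ∀ m : ℕ, r < |(m : ℝ) - lam| →
      1 ≤ ENNReal.ofReal ((exp (t * (m - lam)) + exp (-t * (m - lam))) * exp (-(t * r))) := by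
    intro m hm
    rw [ENNReal.one_le_ofReal, exp_neg, ← div_eq_mul_inv, one_le_div (exp_pos _), neg_mul]
    exact exp_mul_le_exp_mul_add_exp_neg_mul ht hm.le
  refine ENNReal.toReal_le_of_le_ofReal (by positivity) ?_
  calc μ {ω | r < |(X ω : ℝ) - lam|}
      ≤ ∑' m : ℕ, μ {ω | X ω = m} *
          ENNReal.ofReal ((exp (t * (m - lam)) + exp (-t * (m - lam))) * exp (-(t * r))) :=
        measure_setOf_le_tsum_mul μ X hweight
    _ = ENNReal.ofReal (∑' m : ℕ,
          (p m * exp (t * (m - lam)) + p m * exp (-t * (m - lam))) * exp (-(t * r))) := by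
        rw [ENNReal.ofReal_tsum_of_nonneg (fun m => by positivity) hsum.summable]
        congr 1; ext m
        rw [hX, ← ENNReal.ofReal_mul (by positivity)]
        ring_nf
    _ = _ := by rw [hsum.tsum_eq]

theorem stmt18_general {Ω : Type*} [MeasurableSpace Ω] (μ : Measure Ω)
    (lam : ℝ) (hlam : 0 ≤ lam) (X : Ω → ℕ)
    (hX : ∀ m : ℕ, μ {ω | X ω = m} =
      ENNReal.ofReal (Real.exp (-lam) * lam ^ m / m.factorial)) :
    ∀ r > (0 : ℝ),
      (μ {ω | r < |(X ω : ℝ) - lam|}).toReal ≤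
        2 * Real.exp (-(r ^ 2) / (2 * (lam + r))) := by
  intro r hr
  set t := r / (lam + r)
  have ht : 0 ≤ t := by positivity
  calc _ ≤ (exp (lam * (exp t - 1 - t)) + exp (lam * (exp (-t) - 1 - -t))) * exp (-(t * r)) :=
        poisson_abs_sub_tail_le μ hlam X hX ht
    _ ≤ (exp (r ^ 2 / (2 * (lam + r))) + exp (r ^ 2 / (2 * (lam + r)))) * exp (-(t * r)) := by
        gcongr <;> exact mul_exp_sub_one_sub_le_of_abs_eq hlam hr (by simp [t, abs_of_nonneg ht])
    _ = 2 * exp (-(r ^ 2) / (2 * (lam + r))) := by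
        have hlr : 0 < lam + r := by linarith
        rw [← two_mul, mul_assoc, ← exp_add]
        congr 2
        simp only [t]
        field_simp
        ring

/-- Poisson tail bound: if `X ~ Poisson(λ)` with `λ ≥ 0`, then for any `r > 0`,
`P(|X - λ| > r) ≤ 2 exp(-r² / (2(λ + r)))`. -/
theorem stmt18 {Ω : Type*} [MeasurableSpace Ω] (μ : Measure Ω) [IsProbabilityMeasure μ]
    (lam : ℝ) (hlam : 0 ≤ lam) (X : Ω → ℕ)
    (hX : ∀ m : ℕ, μ {ω | X ω = m} =
      ENNReal.ofReal (Real.exp (-lam) * lam ^ m / m.factorial)) :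
    ∀ r > (0 : ℝ),
      (μ {ω | r < |(X ω : ℝ) - lam|}).toReal ≤
        2 * Real.exp (-(r ^ 2) / (2 * (lam + r))) :=
  stmt18_general μ lam hlam X hX
end
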